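/- Let m be a natural number and let g : Fin m → MvPolynomial (Fin m) ℚ be a family of polynomials satisfying the closedness condition pderiv i (g j) = pderiv j (g i) for all i, j : Fin m. Then there exists a polynomial f ∈ MvPolynomial (Fin m) ℚ with pderiv i f = g i for every i. -/

import Mathlib

/-!
Contracting a closed form with the Euler vector field gives the candidate potential
`H = ∑ⱼ Xⱼ gⱼ`. Closedness turns `∂ᵢ H` into `gᵢ + E gᵢ`, where `E = ∑ⱼ Xⱼ ∂ⱼ` is the Euler
operator, which multiplies the coefficient of a monomial of degree `d` by `d`. Hence dividing each
coefficient of `H` by the degree of its monomial yields a primitive; this is where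
characteristic zero enters.
-/

open Finsupp

namespace MvPolynomial

section CommSemiring

variable {R σ : Type*} [CommSemiring R]

theorem coeff_sum_X_mul_pderiv [Fintype σ] (p : MvPolynomial σ R) (s : σ →₀ ℕ) :
    coeff s (∑ j, X j * pderiv j p) = s.degree * coeff s p := by
  classical
  induction p using MvPolynomial.induction_on' with
  | add p q hp hq => simp only [map_add, mul_add, Finset.sum_add_distrib, coeff_add, hp, hq]
  | monomial t r =>
    simp_rw [X_mul_pderiv_monomial, ← Finset.sum_smul, ← degree_eq_sum, coeff_smul, coeff_monomial]
    split_ifs with h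
    · rw [h, nsmul_eq_mul]
    · simp

theorem pderiv_sum_X_mul_of_pderiv_comm [Fintype σ] [DecidableEq σ] {g : σ → MvPolynomial σ R}
    (hclosed : ∀ i j, pderiv i (g j) = pderiv j (g i)) (i : σ) :
    pderiv i (∑ j, X j * g j) = g i + ∑ j, X j * pderiv j (g i) := by
  simp only [map_sum, pderiv_mul, pderiv_X, hclosed i, Finset.sum_add_distrib, Pi.single_apply,
    ite_mul, one_mul, zero_mul, Finset.sum_ite_eq', Finset.mem_univ, if_true]

end CommSemiring

section Field

variable {K σ : Type*} [Field K]

/-- The constant term is sent to `0`, as `x / 0 = 0`. -/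
noncomputable def divDegree (p : MvPolynomial σ K) : MvPolynomial σ K :=
  ∑ s ∈ p.support, monomial s (coeff s p / s.degree)

theorem coeff_divDegree (p : MvPolynomial σ K) (s : σ →₀ ℕ) :
    coeff s (divDegree p) = coeff s p / s.degree := by
  classical
  rw [divDegree, coeff_sum]
  simp only [coeff_monomial, Finset.sum_ite_eq', mem_support_iff]
  split_ifs with h
  · rfl
  · rw [not_not.mp h, zero_div]

theorem pderiv_divDegree_eq_of_coeff [CharZero K] {p q : MvPolynomial σ K} {i : σ}
    (h : ∀ s : σ →₀ ℕ, coeff s (pderiv i p) = (s.degree + 1) * coeff s q) :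
    pderiv i (divDegree p) = q := by
  ext s
  have hdeg : ((s + single i 1).degree : K) = s.degree + 1 := by
    rw [map_add, degree_single, Nat.cast_add, Nat.cast_one]
  have hne : (s.degree : K) + 1 ≠ 0 := by exact_mod_cast s.degree.succ_ne_zero
  rw [coeff_pderiv, coeff_divDegree, hdeg, div_mul_eq_mul_div, ← coeff_pderiv, h s,
    mul_div_cancel_left₀ _ hne]

end Field

end MvPolynomial

open MvPolynomial in
/-- **Algebraic Poincaré lemma in degree one for polynomial rings over ℚ**
(degree-one part of Lemma 3.3(b) of Ausoni–Rognes): every closed polynomial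
`1`-form `∑ gᵢ dXᵢ` over `ℚ` is exact. -/
theorem stmt4 (m : ℕ) (g : Fin m → MvPolynomial (Fin m) ℚ)
    (hclosed : ∀ i j : Fin m,
      MvPolynomial.pderiv i (g j) = MvPolynomial.pderiv j (g i)) :
    ∃ f : MvPolynomial (Fin m) ℚ, ∀ i : Fin m, MvPolynomial.pderiv i f = g i := by
  refine ⟨divDegree (∑ j, X j * g j), fun i => pderiv_divDegree_eq_of_coeff fun s => ?_⟩
  rw [pderiv_sum_X_mul_of_pderiv_comm hclosed, coeff_add, coeff_sum_X_mul_pderiv]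
  ring
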